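/- Let n, q, m11, m12, m21, m22 be naturals with n ≥ 1, q ≥ 1 and m11, m12, m21, m22 ≤ q. Let W1, W2 be random variables with values in nonempty finite types and let X1, X2 : Ω → (Fin n → (Fin q → ZMod 2)) be random variables such that the pair (W1, X1) is independent of the pair (W2, X2). Define the channel outputs pointwise by y1 t = D_{m11}(X1 t) + D_{m12}(X2 t) and y2 t = D_{m21}(X1 t) + D_{m22}(X2 t). Then I(W1 : y1) − I(W1 : y2) ≤ n · max(0, m11 − (m21 − m22)^+) · log 2, where the arithmetic on the right is over the integers. -/

import Mathlib

open MeasureTheory ProbabilityTheory Real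

/-- Shannon entropy (natural logarithm) of a random variable with values in a finite type. -/
noncomputable def entropy {Ω : Type*} [MeasurableSpace Ω] (μ : Measure Ω)
    {S : Type*} [Fintype S] (X : Ω → S) : ℝ :=
  - ∑ x : S, ((μ (X ⁻¹' {x})).toReal * Real.log (μ (X ⁻¹' {x})).toReal)

/-- Conditional entropy H(X | Y) := H(⟨X,Y⟩) − H(Y). -/
noncomputable def condEntropy {Ω : Type*} [MeasurableSpace Ω] (μ : Measure Ω)
    {S T : Type*} [Fintype S] [Fintype T] (X : Ω → S) (Y : Ω → T) : ℝ :=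
  entropy μ (fun ω => (X ω, Y ω)) - entropy μ Y

/-- Mutual information I(X : Y) := H(X) + H(Y) − H(⟨X,Y⟩). -/
noncomputable def mutualInfo {Ω : Type*} [MeasurableSpace Ω] (μ : Measure Ω)
    {S T : Type*} [Fintype S] [Fintype T] (X : Ω → S) (Y : Ω → T) : ℝ :=
  entropy μ X + entropy μ Y - entropy μ (fun ω => (X ω, Y ω))

/-- The shift map `D_m` : multiplication by `S^(q-m)` with `S` the `q × q` lower shift matrix. -/
def Dmap (q m : ℕ) (x : Fin q → ZMod 2) : Fin q → ZMod 2 :=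
  fun i => if _ : q - m ≤ (i : ℕ) then
      x ⟨(i : ℕ) - (q - m), Nat.lt_of_le_of_lt (Nat.sub_le _ _) i.isLt⟩
    else 0

/-!
Put `a = (m21 - m22)⁺` and `r = (m11 - a)⁺`. Receiver 2 sees the top `a` levels `T` of `X1`
free of interference, so `T` is a function of `y2`, while `y1` is a function of `T`, the next
`r` levels `U` of `X1` and the interference `V = D_{m12} X2`. Since `V` is independent of
`(W1, T)`,
`I(W1 : y1) ≤ I(W1 : U, T, V) ≤ H(U) + I(W1 : T, V) = H(U) + I(W1 : T) ≤ H(U) + I(W1 : y2)`,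
and `H(U) ≤ n r log 2`. The Shannon inequalities involved all reduce to Gibbs' inequality.
-/

open Function

theorem mul_log_sub_mul_log_le {p q : ℝ} (hp : 0 ≤ p) (hq : 0 ≤ q) (hpq : p ≠ 0 → q ≠ 0) :
    p * log q - p * log p ≤ q - p := by
  rcases hp.eq_or_lt with rfl | hp
  · simpa using hq
  have hq' : 0 < q := hq.lt_of_ne (hpq hp.ne').symm
  have hlog := log_le_sub_one_of_pos (div_pos hq' hp)
  rw [log_div hq'.ne' hp.ne'] at hlog
  calc p * log q - p * log p = p * (log q - log p) := by ring
    _ ≤ p * (q / p - 1) := mul_le_mul_of_nonneg_left hlog hp.le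
    _ = q - p := by field_simp

theorem sum_mul_log_le_sum_mul_log {ι : Type*} [Fintype ι] {p q : ι → ℝ} (hp : ∀ i, 0 ≤ p i)
    (hq : ∀ i, 0 ≤ q i) (hpq : ∀ i, p i ≠ 0 → q i ≠ 0) (hsum : ∑ i, q i ≤ ∑ i, p i) :
    ∑ i, p i * log (q i) ≤ ∑ i, p i * log (p i) := by
  have h := Finset.sum_le_sum fun i (_ : i ∈ Finset.univ) =>
    mul_log_sub_mul_log_le (hp i) (hq i) (hpq i)
  simp only [Finset.sum_sub_distrib] at h
  linarith

section FiniteMeasure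

variable {Ω : Type*} [MeasurableSpace Ω] {μ : Measure Ω} {S T U : Type*}

lemma entropy_eq_neg_sum [Fintype S] (X : Ω → S) :
    entropy μ X = -∑ x, μ.real (X ⁻¹' {x}) * log (μ.real (X ⁻¹' {x})) := rfl

variable [IsFiniteMeasure μ]

lemma measureReal_preimage_le_comp (Z : Ω → S) (f : S → T) (s : S) :
    μ.real (Z ⁻¹' {s}) ≤ μ.real ((fun ω => f (Z ω)) ⁻¹' {f s}) :=
  measureReal_mono fun ω (h : Z ω = s) => show f (Z ω) = f s by rw [h]

variable [Fintype S] [MeasurableSpace S] [MeasurableSingletonClass S]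

lemma measureReal_preimage_comp_eq_sum [DecidableEq T] {Z : Ω → S} (hZ : Measurable Z)
    (f : S → T) (t : T) :
    μ.real ((fun ω => f (Z ω)) ⁻¹' {t}) = ∑ s with f s = t, μ.real (Z ⁻¹' {s}) := by
  rw [sum_measureReal_preimage_singleton _ fun s _ => hZ (measurableSet_singleton s)]
  congr 1
  ext ω
  simp

lemma sum_measureReal_preimage_eq_measureReal_univ {Z : Ω → S} (hZ : Measurable Z) :
    ∑ s, μ.real (Z ⁻¹' {s}) = μ.real Set.univ := by
  rw [sum_measureReal_preimage_singleton _ fun s _ => hZ (measurableSet_singleton s),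
    Finset.coe_univ, Set.preimage_univ]

variable [Fintype T]

lemma sum_mul_log_measureReal_comp {Z : Ω → S} (hZ : Measurable Z) (f : S → T) :
    ∑ s, μ.real (Z ⁻¹' {s}) * log (μ.real ((fun ω => f (Z ω)) ⁻¹' {f s})) =
      -entropy μ (fun ω => f (Z ω)) := by
  classical
  rw [entropy_eq_neg_sum, neg_neg, ← Finset.sum_fiberwise Finset.univ f]
  refine Finset.sum_congr rfl fun t _ => ?_
  rw [measureReal_preimage_comp_eq_sum hZ f t, Finset.sum_mul]
  exact Finset.sum_congr rfl fun s hs => by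
    rw [← measureReal_preimage_comp_eq_sum hZ f t, (Finset.mem_filter.1 hs).2]

lemma entropy_comp_of_injective {Z : Ω → S} (hZ : Measurable Z) {f : S → T}
    (hf : Injective f) : entropy μ (fun ω => f (Z ω)) = entropy μ Z := by
  rw [← neg_inj, ← sum_mul_log_measureReal_comp hZ f, entropy_eq_neg_sum, neg_neg]
  refine Finset.sum_congr rfl fun s _ => ?_
  congr 3
  ext ω
  simp [hf.eq_iff]

lemma entropy_comp_le {Z : Ω → S} (hZ : Measurable Z) (f : S → T) :
    entropy μ (fun ω => f (Z ω)) ≤ entropy μ Z := by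
  rw [← neg_le_neg_iff, ← sum_mul_log_measureReal_comp hZ f, entropy_eq_neg_sum, neg_neg]
  refine Finset.sum_le_sum fun s _ => ?_
  rcases measureReal_nonneg.eq_or_lt with h | h
  · rw [← h]; simp
  · exact mul_le_mul_of_nonneg_left (log_le_log h (measureReal_preimage_le_comp Z f s)) h.le

variable [MeasurableSpace T] [MeasurableSingletonClass T]

lemma sum_measureReal_preimage_pair {A : Ω → S} {C : Ω → T} (hA : Measurable A)
    (hC : Measurable C) (c : T) :
    ∑ a, μ.real ((fun ω => (A ω, C ω)) ⁻¹' {(a, c)}) = μ.real (C ⁻¹' {c}) := by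
  classical
  rw [measureReal_preimage_comp_eq_sum (hA.prodMk hC) Prod.snd, Finset.sum_filter,
    Fintype.sum_prod_type]
  simp

variable [Fintype U] [MeasurableSpace U] [MeasurableSingletonClass U]

lemma sum_condIndepCoupling_eq_measureReal_univ {A : Ω → S} {B : Ω → T} {C : Ω → U}
    (hA : Measurable A) (hB : Measurable B) (hC : Measurable C) :
    ∑ s : S × T × U, μ.real ((fun ω => (A ω, C ω)) ⁻¹' {(s.1, s.2.2)}) *
      μ.real ((fun ω => (B ω, C ω)) ⁻¹' {s.2}) / μ.real (C ⁻¹' {s.2.2}) = μ.real Set.univ := by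
  rw [← sum_measureReal_preimage_eq_measureReal_univ hC]
  calc _ = ∑ c, (∑ a, μ.real ((fun ω => (A ω, C ω)) ⁻¹' {(a, c)})) *
        (∑ b, μ.real ((fun ω => (B ω, C ω)) ⁻¹' {(b, c)})) / μ.real (C ⁻¹' {c}) := by
        simp only [Fintype.sum_prod_type, Finset.sum_mul_sum, Finset.sum_div]
        exact (Finset.sum_congr rfl fun _ _ => Finset.sum_comm).trans Finset.sum_comm
    _ = _ := by
        simp only [sum_measureReal_preimage_pair hA hC, sum_measureReal_preimage_pair hB hC,
          mul_self_div_self]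

theorem entropy_triple_add_entropy_le {A : Ω → S} {B : Ω → T} {C : Ω → U} (hA : Measurable A)
    (hB : Measurable B) (hC : Measurable C) :
    entropy μ (fun ω => (A ω, B ω, C ω)) + entropy μ C ≤
      entropy μ (fun ω => (A ω, C ω)) + entropy μ (fun ω => (B ω, C ω)) := by
  have hZ : Measurable fun ω => (A ω, B ω, C ω) := hA.prodMk (hB.prodMk hC)
  set p : S × T × U → ℝ := fun s => μ.real ((fun ω => (A ω, B ω, C ω)) ⁻¹' {s})
  set pAC : S × U → ℝ := fun x => μ.real ((fun ω => (A ω, C ω)) ⁻¹' {x})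
  set pBC : T × U → ℝ := fun x => μ.real ((fun ω => (B ω, C ω)) ⁻¹' {x})
  set pC : U → ℝ := fun c => μ.real (C ⁻¹' {c})
  have hpos : ∀ s, p s ≠ 0 → pAC (s.1, s.2.2) ≠ 0 ∧ pBC s.2 ≠ 0 ∧ pC s.2.2 ≠ 0 := by
    intro s hs
    have hs : 0 < p s := measureReal_nonneg.lt_of_ne' hs
    exact ⟨(hs.trans_le (measureReal_preimage_le_comp _ (fun s => (s.1, s.2.2)) s)).ne',
      (hs.trans_le (measureReal_preimage_le_comp _ Prod.snd s)).ne',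
      (hs.trans_le (measureReal_preimage_le_comp _ (fun s => s.2.2) s)).ne'⟩
  have hsplit : ∀ s, p s * log (pAC (s.1, s.2.2) * pBC s.2 / pC s.2.2) =
      p s * log (pAC (s.1, s.2.2)) + p s * log (pBC s.2) - p s * log (pC s.2.2) := by
    intro s
    by_cases hs : p s = 0
    · simp [hs]
    obtain ⟨h1, h2, h3⟩ := hpos s hs
    rw [log_div (mul_ne_zero h1 h2) h3, log_mul h1 h2]
    ring
  -- Gibbs against the coupling of `(A, C)` and `(B, C)` conditionally independent given `C`.
  have hgibbs := sum_mul_log_le_sum_mul_log (p := p)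
    (q := fun s => pAC (s.1, s.2.2) * pBC s.2 / pC s.2.2) (fun _ => measureReal_nonneg)
    (fun _ => by positivity) (fun s hs => by
      obtain ⟨h1, h2, h3⟩ := hpos s hs
      exact div_ne_zero (mul_ne_zero h1 h2) h3)
    (by rw [sum_condIndepCoupling_eq_measureReal_univ hA hB hC,
      sum_measureReal_preimage_eq_measureReal_univ hZ])
  have hAC : ∑ s, p s * log (pAC (s.1, s.2.2)) = -entropy μ (fun ω => (A ω, C ω)) :=
    sum_mul_log_measureReal_comp hZ fun s => (s.1, s.2.2)
  have hBC : ∑ s, p s * log (pBC s.2) = -entropy μ (fun ω => (B ω, C ω)) :=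
    sum_mul_log_measureReal_comp hZ Prod.snd
  have hC' : ∑ s, p s * log (pC s.2.2) = -entropy μ C :=
    sum_mul_log_measureReal_comp hZ fun s => s.2.2
  simp only [hsplit, Finset.sum_add_distrib, Finset.sum_sub_distrib, hAC, hBC, hC'] at hgibbs
  rw [entropy_eq_neg_sum]
  linarith

lemma mutualInfo_comp_le {D : Type*} [Fintype D] [MeasurableSpace D]
    [MeasurableSingletonClass D] {W : Ω → D} {Z : Ω → S} (hW : Measurable W)
    (hZ : Measurable Z) (g : S → T) :
    mutualInfo μ W (fun ω => g (Z ω)) ≤ mutualInfo μ W Z := by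
  have h := entropy_triple_add_entropy_le (μ := μ) (C := fun ω => g (Z ω)) hW hZ
    (measurable_of_countable g |>.comp hZ)
  have hZg : entropy μ (fun ω => (Z ω, g (Z ω))) = entropy μ Z :=
    entropy_comp_of_injective hZ (f := fun s => (s, g s)) fun _ _ h => by simp_all [Prod.ext_iff]
  have hWZg : entropy μ (fun ω => (W ω, Z ω, g (Z ω))) = entropy μ (fun ω => (W ω, Z ω)) :=
    entropy_comp_of_injective (hW.prodMk hZ) (f := fun x => (x.1, x.2, g x.2))
      fun _ _ h => by simp_all [Prod.ext_iff]
  unfold mutualInfo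
  linarith

end FiniteMeasure

section ProbabilityMeasure

variable {Ω : Type*} [MeasurableSpace Ω] {μ : Measure Ω} [IsProbabilityMeasure μ]
  {S T : Type*} [Fintype S]

lemma entropy_const (c : S) : entropy μ (fun _ => c) = 0 := by
  classical
  rw [entropy_eq_neg_sum, Finset.sum_eq_single c]
  · simp
  · intro s _ hs
    simp [Set.preimage_const_of_notMem (Set.mem_singleton_iff.not.2 hs.symm)]
  · simp

variable [MeasurableSpace S] [MeasurableSingletonClass S]

theorem entropy_le_log_card {X : Ω → S} (hX : Measurable X) :
    entropy μ X ≤ log (Fintype.card S) := by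
  have hp_sum : ∑ x, μ.real (X ⁻¹' {x}) = 1 := by
    rw [sum_measureReal_preimage_eq_measureReal_univ hX, probReal_univ]
  have h := sum_mul_log_le_sum_mul_log (p := fun x => μ.real (X ⁻¹' {x}))
    (q := fun _ => (Fintype.card S : ℝ)⁻¹) (fun _ => measureReal_nonneg)
    (fun _ => by positivity)
    (fun x _ => by have : Nonempty S := ⟨x⟩; positivity)
    (by
      rw [hp_sum, Finset.sum_const, Finset.card_univ, nsmul_eq_mul]
      exact mul_inv_le_one)
  rw [← Finset.sum_mul, hp_sum, one_mul, log_inv, ← neg_neg (∑ x, _), ← entropy_eq_neg_sum]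
    at h
  linarith

variable [Fintype T] [MeasurableSpace T] [MeasurableSingletonClass T]

theorem entropy_pair_le {A : Ω → S} {B : Ω → T} (hA : Measurable A) (hB : Measurable B) :
    entropy μ (fun ω => (A ω, B ω)) ≤ entropy μ A + entropy μ B := by
  have h := entropy_triple_add_entropy_le (μ := μ) hA hB (measurable_const (a := ()))
  have hAB : entropy μ (fun ω => (A ω, B ω, ())) = entropy μ (fun ω => (A ω, B ω)) :=
    entropy_comp_of_injective (hA.prodMk hB) (f := fun x => (x.1, x.2, ()))
      fun _ _ h => by simp_all [Prod.ext_iff]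
  have hA' : entropy μ (fun ω => (A ω, ())) = entropy μ A :=
    entropy_comp_of_injective hA (f := fun a => (a, ())) fun _ _ h => by simp_all [Prod.ext_iff]
  have hB' : entropy μ (fun ω => (B ω, ())) = entropy μ B :=
    entropy_comp_of_injective hB (f := fun b => (b, ())) fun _ _ h => by simp_all [Prod.ext_iff]
  rw [hAB, hA', hB', entropy_const, add_zero] at h
  exact h

theorem entropy_pair_of_indepFun {A : Ω → S} {B : Ω → T} (hA : Measurable A)
    (hB : Measurable B) (hAB : IndepFun A B μ) :
    entropy μ (fun ω => (A ω, B ω)) = entropy μ A + entropy μ B := by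
  have hZ := hA.prodMk hB
  have hmul : ∀ x : S × T, μ.real ((fun ω => (A ω, B ω)) ⁻¹' {x}) =
      μ.real (A ⁻¹' {x.1}) * μ.real (B ⁻¹' {x.2}) := fun x => by
    rw [← Set.singleton_prod_singleton, Set.mk_preimage_prod, measureReal_def,
      hAB.measure_inter_preimage_eq_mul _ _ (measurableSet_singleton _)
        (measurableSet_singleton _), ENNReal.toReal_mul]
    rfl
  have hsplit : ∀ x : S × T, μ.real ((fun ω => (A ω, B ω)) ⁻¹' {x}) *
      log (μ.real ((fun ω => (A ω, B ω)) ⁻¹' {x})) =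
      μ.real ((fun ω => (A ω, B ω)) ⁻¹' {x}) * log (μ.real (A ⁻¹' {x.1})) +
      μ.real ((fun ω => (A ω, B ω)) ⁻¹' {x}) * log (μ.real (B ⁻¹' {x.2})) := fun x => by
    by_cases hx : μ.real ((fun ω => (A ω, B ω)) ⁻¹' {x}) = 0
    · simp [hx]
    rw [hmul] at hx ⊢
    rw [log_mul (left_ne_zero_of_mul hx) (right_ne_zero_of_mul hx), mul_add]
  rw [← neg_inj, neg_add, ← sum_mul_log_measureReal_comp hZ Prod.fst,
    ← sum_mul_log_measureReal_comp hZ Prod.snd, ← Finset.sum_add_distrib, entropy_eq_neg_sum,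
    neg_neg]
  exact Finset.sum_congr rfl fun x _ => hsplit x

theorem mutualInfo_pair_le_entropy_add {D R : Type*} [Fintype D] [MeasurableSpace D]
    [MeasurableSingletonClass D] [Fintype R] [MeasurableSpace R] [MeasurableSingletonClass R]
    {W : Ω → D} {U : Ω → R} {Z : Ω → S} (hW : Measurable W) (hU : Measurable U)
    (hZ : Measurable Z) :
    mutualInfo μ W (fun ω => (U ω, Z ω)) ≤ entropy μ U + mutualInfo μ W Z := by
  have hUZ := entropy_pair_le (μ := μ) hU hZ
  have hWZ : entropy μ (fun ω => (W ω, Z ω)) ≤ entropy μ (fun ω => (W ω, U ω, Z ω)) :=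
    entropy_comp_le (hW.prodMk (hU.prodMk hZ)) fun x => (x.1, x.2.2)
  unfold mutualInfo
  linarith

theorem mutualInfo_pair_eq_of_indepFun {D : Type*} [Fintype D] [MeasurableSpace D]
    [MeasurableSingletonClass D] {W : Ω → D} {Y : Ω → S} {Z : Ω → T} (hW : Measurable W)
    (hY : Measurable Y) (hZ : Measurable Z) (hind : IndepFun (fun ω => (W ω, Y ω)) Z μ) :
    mutualInfo μ W (fun ω => (Y ω, Z ω)) = mutualInfo μ W Y := by
  have hYZ : entropy μ (fun ω => (Y ω, Z ω)) = entropy μ Y + entropy μ Z :=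
    entropy_pair_of_indepFun hY hZ (hind.comp measurable_snd measurable_id)
  have hWYZ : entropy μ (fun ω => (W ω, Y ω, Z ω)) = entropy μ (fun ω => ((W ω, Y ω), Z ω)) :=
    entropy_comp_of_injective ((hW.prodMk hY).prodMk hZ) (f := fun x => (x.1.1, x.1.2, x.2))
      fun _ _ h => by simp_all [Prod.ext_iff]
  unfold mutualInfo
  rw [hYZ, hWYZ, entropy_pair_of_indepFun (hW.prodMk hY) hZ hind]
  ring

theorem mutualInfo_sub_mutualInfo_le_entropy {D R P E₁ E₂ : Type*} [Fintype D]
    [MeasurableSpace D] [MeasurableSingletonClass D] [Fintype R] [MeasurableSpace R]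
    [MeasurableSingletonClass R] [Fintype P] [MeasurableSpace P] [MeasurableSingletonClass P]
    [Fintype E₁] [MeasurableSpace E₁] [MeasurableSingletonClass E₁] [Fintype E₂]
    [MeasurableSpace E₂] [MeasurableSingletonClass E₂]
    {W : Ω → D} {Y : Ω → S} {U : Ω → R} {V : Ω → P} {Y₁ : Ω → E₁} {Y₂ : Ω → E₂}
    (hW : Measurable W) (hY : Measurable Y) (hU : Measurable U) (hV : Measurable V)
    (hY₂ : Measurable Y₂) (hind : IndepFun (fun ω => (W ω, Y ω)) V μ)
    (f : R × S × P → E₁) (hY₁ : ∀ ω, Y₁ ω = f (U ω, Y ω, V ω))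
    (g : E₂ → S) (hYY₂ : ∀ ω, Y ω = g (Y₂ ω)) :
    mutualInfo μ W Y₁ - mutualInfo μ W Y₂ ≤ entropy μ U := by
  have hYV := hY.prodMk hV
  suffices mutualInfo μ W Y₁ ≤ entropy μ U + mutualInfo μ W Y₂ by linarith
  calc mutualInfo μ W Y₁ ≤ mutualInfo μ W (fun ω => (U ω, Y ω, V ω)) := by
        rw [funext hY₁]; exact mutualInfo_comp_le hW (hU.prodMk hYV) f
    _ ≤ entropy μ U + mutualInfo μ W (fun ω => (Y ω, V ω)) :=
        mutualInfo_pair_le_entropy_add hW hU hYV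
    _ = entropy μ U + mutualInfo μ W Y := by rw [mutualInfo_pair_eq_of_indepFun hW hY hV hind]
    _ ≤ entropy μ U + mutualInfo μ W Y₂ := by
        rw [funext hYY₂]; gcongr; exact mutualInfo_comp_le hW hY₂ g

end ProbabilityMeasure

section Shift

variable {n q m m' a r : ℕ}

lemma Dmap_congr {x x' : Fin q → ZMod 2} (h : ∀ j : Fin q, (j : ℕ) < m → x j = x' j) :
    Dmap q m x = Dmap q m x' := by
  funext i
  unfold Dmap
  split_ifs
  · exact h _ (by rw [Fin.val_mk]; omega)
  · rfl

lemma Dmap_add_Dmap_apply (x x' : Fin q → ZMod 2) (hm : m ≤ q) {j : ℕ} (hj : j + m' < m) :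
    (Dmap q m x + Dmap q m' x') ⟨q - m + j, by omega⟩ = x ⟨j, by omega⟩ := by
  simp only [Pi.add_apply, Dmap]
  rw [dif_pos (by simp), dif_neg (by simp only [tsub_le_iff_right, not_le]; omega), add_zero]
  congr 2
  simp

-- Level `0` is the most significant one: `Dmap q m` keeps exactly the levels `j < m`.
def highBits (ha : a ≤ q) (x : Fin n → Fin q → ZMod 2) : Fin n → Fin a → ZMod 2 :=
  fun t j => x t (Fin.castLE ha j)

def midBits (har : a + r ≤ q) (x : Fin n → Fin q → ZMod 2) : Fin n → Fin r → ZMod 2 :=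
  fun t j => x t ⟨a + j, by omega⟩

lemma Dmap_eq_of_highBits_eq_of_midBits_eq (ha : a ≤ q) (har : a + r ≤ q) (hm : m ≤ a + r)
    {x x' : Fin n → Fin q → ZMod 2} (hhigh : highBits ha x = highBits ha x')
    (hmid : midBits har x = midBits har x') (t : Fin n) :
    Dmap q m (x t) = Dmap q m (x' t) := by
  refine Dmap_congr fun j hj => ?_
  by_cases hja : (j : ℕ) < a
  · exact congrFun (congrFun hhigh t) ⟨j, hja⟩
  · simpa [midBits, Nat.add_sub_cancel' (not_lt.1 hja)] using
      congrFun (congrFun hmid t) ⟨j - a, by omega⟩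

lemma highBits_eq_of_Dmap_add_Dmap_eq (ha : a ≤ q) (hm : m ≤ q) (ham : a ≤ m - m')
    {x x' z z' : Fin n → Fin q → ZMod 2}
    (h : ∀ t, Dmap q m (x t) + Dmap q m' (z t) = Dmap q m (x' t) + Dmap q m' (z' t)) :
    highBits ha x = highBits ha x' := by
  funext t j
  have := congrFun (h t) ⟨q - m + j, by omega⟩
  rwa [Dmap_add_Dmap_apply _ _ hm (by omega), Dmap_add_Dmap_apply _ _ hm (by omega)] at this

end Shift

theorem stmt8_general {Ω : Type*} [MeasurableSpace Ω] (μ : Measure Ω) [IsProbabilityMeasure μ]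
    (n q m11 m12 m21 m22 : ℕ)
    (h11 : m11 ≤ q) (h21 : m21 ≤ q)
    {D1 D2 : Type*} [Fintype D1] [MeasurableSpace D1] [DiscreteMeasurableSpace D1]
    [MeasurableSpace D2]
    (W1 : Ω → D1) (W2 : Ω → D2) (X1 X2 : Ω → (Fin n → Fin q → ZMod 2))
    (hW1 : Measurable W1) (hX1 : Measurable X1) (hX2 : Measurable X2)
    (hIndep : IndepFun (fun ω => (W1 ω, X1 ω)) (fun ω => (W2 ω, X2 ω)) μ)
    (y1 y2 : Ω → (Fin n → Fin q → ZMod 2))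
    (hy1 : ∀ ω t, y1 ω t = Dmap q m11 (X1 ω t) + Dmap q m12 (X2 ω t))
    (hy2 : ∀ ω t, y2 ω t = Dmap q m21 (X1 ω t) + Dmap q m22 (X2 ω t)) :
    mutualInfo μ W1 y1 - mutualInfo μ W1 y2 ≤
      (n : ℝ) * ((max 0 ((m11 : ℤ) - max ((m21 : ℤ) - (m22 : ℤ)) 0) : ℤ) : ℝ) * Real.log 2 := by
  set a := m21 - m22
  set r := m11 - a
  have ha : a ≤ q := by omega
  have har : a + r ≤ q := by omega
  let T := fun ω => highBits ha (X1 ω)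
  let U := fun ω => midBits har (X1 ω)
  let V : Ω → Fin n → Fin q → ZMod 2 := fun ω t => Dmap q m12 (X2 ω t)
  have hy1_of : FactorsThrough y1 (fun ω => (U ω, T ω, V ω)) := fun ω ω' h => by
    simp only [Prod.mk.injEq] at h
    funext t
    rw [hy1, hy1, Dmap_eq_of_highBits_eq_of_midBits_eq ha har (by omega) h.2.1 h.1 t]
    exact congrArg _ (congrFun h.2.2 t)
  have hT_of : FactorsThrough T y2 := fun ω ω' h =>
    highBits_eq_of_Dmap_add_Dmap_eq ha h21 le_rfl fun t => by rw [← hy2, ← hy2, h]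
  have hy2m : Measurable y2 := by
    rw [funext fun ω => funext (hy2 ω)]
    fun_prop
  have hind : IndepFun (fun ω => (W1 ω, T ω)) V μ :=
    hIndep.comp (measurable_of_countable fun p => (p.1, highBits ha p.2))
      ((measurable_of_countable fun x t => Dmap q m12 (x t)).comp measurable_snd)
  have hUm : Measurable U := (measurable_of_countable (midBits har)).comp hX1
  have hr : (max 0 ((m11 : ℤ) - max ((m21 : ℤ) - (m22 : ℤ)) 0)) = (r : ℤ) := by omega
  calc _ ≤ entropy μ U :=
        mutualInfo_sub_mutualInfo_le_entropy hW1 ((measurable_of_countable (highBits ha)).comp hX1)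
          hUm (by fun_prop) hy2m hind
          _ (fun ω => (hy1_of.extend_apply 0 ω).symm) _ (fun ω => (hT_of.extend_apply 0 ω).symm)
    _ ≤ log (Fintype.card (Fin n → Fin r → ZMod 2)) := entropy_le_log_card hUm
    _ = _ := by
        rw [hr, Fintype.card_fun, Fintype.card_fun, ZMod.card, Fintype.card_fin,
          Fintype.card_fin]
        push_cast
        rw [log_pow, log_pow]
        ring

theorem stmt8 {Ω : Type*} [MeasurableSpace Ω] (μ : Measure Ω) [IsProbabilityMeasure μ]
    (n q m11 m12 m21 m22 : ℕ) (hn : 1 ≤ n) (hq : 1 ≤ q)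
    (h11 : m11 ≤ q) (h12 : m12 ≤ q) (h21 : m21 ≤ q) (h22 : m22 ≤ q)
    {D1 D2 : Type*} [Fintype D1] [Nonempty D1] [MeasurableSpace D1] [DiscreteMeasurableSpace D1]
    [Fintype D2] [Nonempty D2] [MeasurableSpace D2] [DiscreteMeasurableSpace D2]
    (W1 : Ω → D1) (W2 : Ω → D2) (X1 X2 : Ω → (Fin n → Fin q → ZMod 2))
    (hW1 : Measurable W1) (hW2 : Measurable W2) (hX1 : Measurable X1) (hX2 : Measurable X2)
    (hIndep : IndepFun (fun ω => (W1 ω, X1 ω)) (fun ω => (W2 ω, X2 ω)) μ)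
    (y1 y2 : Ω → (Fin n → Fin q → ZMod 2))
    (hy1 : ∀ ω t, y1 ω t = Dmap q m11 (X1 ω t) + Dmap q m12 (X2 ω t))
    (hy2 : ∀ ω t, y2 ω t = Dmap q m21 (X1 ω t) + Dmap q m22 (X2 ω t)) :
    mutualInfo μ W1 y1 - mutualInfo μ W1 y2 ≤
      (n : ℝ) * ((max 0 ((m11 : ℤ) - max ((m21 : ℤ) - (m22 : ℤ)) 0) : ℤ) : ℝ) * Real.log 2 :=
  stmt8_general μ n q m11 m12 m21 m22 h11 h21 W1 W2 X1 X2 hW1 hX1 hX2 hIndep y1 y2 hy1 hy2
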